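/- arXiv:2009.00482 — 5 statements merged into one kernel-verified Lean document; each statement's English description precedes it below -/
import Mathlib

section
/- Let M be an m×n nonnegative real matrix and let r ∈ ℝ^m, c ∈ ℝ^n be strictly positive vectors with 1ₘᵀ r = cᵀ 1ₙ. If S₁ = D₁ M E₁ and S₂ = D₂ M E₂ are two matrices with row sums r and column sums c, where D₁, D₂ are positive diagonal m×m matrices and E₁, E₂ are positive diagonal n×n matrices, then S₁ = S₂. -/
open Matrix Finset

/-- For positive `t`, `(t - 1) * log t ≥ 0`. -/
lemma aux_nonneg_log (t : ℝ) (ht : 0 < t) : 0 ≤ (t - 1) * Real.log t := by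
  rcases le_or_gt 1 t with h | h
  · exact mul_nonneg (by linarith) (Real.log_nonneg h)
  · have := mul_nonneg (neg_nonneg.2 (by linarith : t - 1 ≤ 0))
      (neg_nonneg.2 (Real.log_nonpos ht.le h.le))
    nlinarith [this]

lemma aux_eq_one (t : ℝ) (ht : 0 < t) (h : (t - 1) * Real.log t = 0) : t = 1 := by
  rcases mul_eq_zero.mp h with h1 | h1
  · linarith
  · rcases Real.log_eq_zero.mp h1 with h2 | h2 | h2 <;> linarith

/-- Uniqueness of the two-sided diagonally scaled matrix with prescribed
row sums `r` and column sums `c` (Rothblum–Schneider / Menon). -/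
theorem scaled_matrix_unique
    {m n : ℕ} (M : Matrix (Fin m) (Fin n) ℝ)
    (hM : ∀ i j, 0 ≤ M i j)
    (r : Fin m → ℝ) (c : Fin n → ℝ)
    (hr : ∀ i, 0 < r i) (hc : ∀ j, 0 < c j)
    (hrc : ∑ i, r i = ∑ j, c j)
    (d₁ d₂ : Fin m → ℝ) (e₁ e₂ : Fin n → ℝ)
    (hd₁ : ∀ i, 0 < d₁ i) (hd₂ : ∀ i, 0 < d₂ i)
    (he₁ : ∀ j, 0 < e₁ j) (he₂ : ∀ j, 0 < e₂ j)
    (S₁ S₂ : Matrix (Fin m) (Fin n) ℝ)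
    (hS₁ : S₁ = diagonal d₁ * M * diagonal e₁)
    (hS₂ : S₂ = diagonal d₂ * M * diagonal e₂)
    (hrow₁ : ∀ i, ∑ j, S₁ i j = r i) (hcol₁ : ∀ j, ∑ i, S₁ i j = c j)
    (hrow₂ : ∀ i, ∑ j, S₂ i j = r i) (hcol₂ : ∀ j, ∑ i, S₂ i j = c j) :
    S₁ = S₂ := by
  have hS₁e : ∀ i j, S₁ i j = d₁ i * M i j * e₁ j := by
    intro i j; rw [hS₁]; simp [Matrix.mul_diagonal, Matrix.diagonal_mul]
  have hS₂e : ∀ i j, S₂ i j = d₂ i * M i j * e₂ j := by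
    intro i j; rw [hS₂]; simp [Matrix.mul_diagonal, Matrix.diagonal_mul]
  set α : Fin m → ℝ := fun i => d₂ i / d₁ i with hα
  set β : Fin n → ℝ := fun j => e₂ j / e₁ j with hβ
  have hαpos : ∀ i, 0 < α i := fun i => div_pos (hd₂ i) (hd₁ i)
  have hβpos : ∀ j, 0 < β j := fun j => div_pos (he₂ j) (he₁ j)
  have hrel : ∀ i j, S₂ i j = α i * β j * S₁ i j := by
    intro i j
    rw [hS₁e, hS₂e, hα, hβ]
    field_simp [(hd₁ i).ne', (he₁ j).ne']
  have hS₁nn : ∀ i j, 0 ≤ S₁ i j := by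
    intro i j; rw [hS₁e]
    exact mul_nonneg (mul_nonneg (hd₁ i).le (hM i j)) (he₁ j).le
  -- key identity: the double sum of nonnegative terms vanishes
  have key : ∑ i, ∑ j, (S₂ i j - S₁ i j) * (Real.log (α i) + Real.log (β j)) = 0 := by
    have expand : ∀ i j, (S₂ i j - S₁ i j) * (Real.log (α i) + Real.log (β j))
        = (S₂ i j - S₁ i j) * Real.log (α i) + (S₂ i j - S₁ i j) * Real.log (β j) := by
      intro i j; ring
    simp_rw [expand, Finset.sum_add_distrib]
    have h1 : ∑ i, ∑ j, (S₂ i j - S₁ i j) * Real.log (α i) = 0 := by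
      apply Finset.sum_eq_zero; intro i _
      rw [← Finset.sum_mul]
      simp [Finset.sum_sub_distrib, hrow₁ i, hrow₂ i]
    have h2 : ∑ i, ∑ j, (S₂ i j - S₁ i j) * Real.log (β j) = 0 := by
      rw [Finset.sum_comm]
      apply Finset.sum_eq_zero; intro j _
      rw [← Finset.sum_mul]
      simp [Finset.sum_sub_distrib, hcol₁ j, hcol₂ j]
    rw [h1, h2, add_zero]
  have term_eq : ∀ i j, (S₂ i j - S₁ i j) * (Real.log (α i) + Real.log (β j))
      = S₁ i j * ((α i * β j - 1) * Real.log (α i * β j)) := by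
    intro i j
    rw [hrel i j, ← Real.log_mul (hαpos i).ne' (hβpos j).ne']
    ring
  have nonneg : ∀ i j, 0 ≤ S₁ i j * ((α i * β j - 1) * Real.log (α i * β j)) := by
    intro i j
    exact mul_nonneg (hS₁nn i j)
      (aux_nonneg_log _ (mul_pos (hαpos i) (hβpos j)))
  have each_zero : ∀ i j, S₁ i j * ((α i * β j - 1) * Real.log (α i * β j)) = 0 := by
    have keysum : ∑ i, ∑ j, S₁ i j * ((α i * β j - 1) * Real.log (α i * β j)) = 0 := by
      rw [← key]; exact Finset.sum_congr rfl fun i _ =>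
        Finset.sum_congr rfl fun j _ => (term_eq i j).symm
    intro i j
    have houter := (Finset.sum_eq_zero_iff_of_nonneg
      (fun i _ => Finset.sum_nonneg fun j _ => nonneg i j)).mp keysum i (Finset.mem_univ i)
    exact (Finset.sum_eq_zero_iff_of_nonneg (fun j _ => nonneg i j)).mp houter j
      (Finset.mem_univ j)
  ext i j
  rcases eq_or_ne (S₁ i j) 0 with h0 | h0
  · have hM0 : M i j = 0 := by
      have := hS₁e i j
      rw [h0] at this
      have := this.symm
      rcases mul_eq_zero.mp this with h | h
      · rcases mul_eq_zero.mp h with h | h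
        · exact absurd h (hd₁ i).ne'
        · exact h
      · exact absurd h (he₁ j).ne'
    rw [h0, hS₂e, hM0]; ring
  · have := each_zero i j
    rcases mul_eq_zero.mp this with h | h
    · exact absurd h h0
    · have ht1 := aux_eq_one _ (mul_pos (hαpos i) (hβpos j)) h
      rw [hrel i j, ht1, one_mul]
end

section
/- Let M be an n×n nonnegative real matrix such that every diagonal entry of M is nonzero and supp(M) = supp(Mᵀ) (i.e., m_{ij} ≠ 0 iff m_{ji} ≠ 0). Let v ∈ ℝ^n be strictly positive. Then there exist positive diagonal matrices D_ℓ and D_r such that S = D_ℓ M D_r satisfies S·1ₙ = v and 1ₙᵀ·S = vᵀ. -/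
/-!
Write `D_ℓ = diag(e^x)` and `D_r = diag(e^y)`. The scaling equations are exactly the stationarity
conditions of the convex potential `F(x, y) = ∑ m_ij e^(x_i + y_j) - ∑ v_i (x_i + y_i)`, so it
suffices that `F` attains its minimum. `F` is invariant under the subspace `K` of `(x, y)` with
`x_i + y_j = 0` on `supp M`, and a continuous convex function on a finite-dimensional space that
is invariant along `K` and bounded above on no ray leaving `K` attains its minimum. If `F` stays
bounded along the ray `t (u, w)`, then `u_i + w_j ≤ 0` on the support (else `F` grows
exponentially) and `vᵀu + vᵀw ≥ 0` (else it grows linearly); this is the Rothblum–Schneider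
alternative. The positive diagonal and the symmetric support then force `u_i + w_j = 0` on the
support, i.e. `(u, w) ∈ K`.
-/

open Matrix Finset Real

section ConvexAnalysis

theorem ConvexOn.sum {𝕜 E ι β : Type*} [Semiring 𝕜] [PartialOrder 𝕜] [AddCommMonoid E]
    [AddCommMonoid β] [PartialOrder β] [IsOrderedAddMonoid β] [SMul 𝕜 E] [Module 𝕜 β]
    {s : Set E} {t : Finset ι} {f : ι → E → β} (hs : Convex 𝕜 s)
    (hf : ∀ i ∈ t, ConvexOn 𝕜 s (f i)) : ConvexOn 𝕜 s fun x ↦ ∑ i ∈ t, f i x := by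
  classical
  induction t using Finset.induction_on with
  | empty => simpa using convexOn_const (0 : β) hs
  | insert a t ha ih =>
    simp only [sum_insert ha]
    exact (hf a (mem_insert_self a t)).add (ih fun i hi ↦ hf i (mem_insert_of_mem hi))

variable {E : Type*} [NormedAddCommGroup E] [NormedSpace ℝ E] [FiniteDimensional ℝ E]

theorem Convex.exists_ray_subset_of_not_isBounded {s : Set E} (hs : Convex ℝ s)
    (hsc : IsClosed s) (h0 : 0 ∈ s) (hsb : ¬ Bornology.IsBounded s) :
    ∃ d : E, d ≠ 0 ∧ ∀ t : ℝ, 0 ≤ t → t • d ∈ s := by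
  have hfar : ∀ k : ℕ, ∃ x ∈ s, (k : ℝ) < ‖x‖ := by
    by_contra! ⟨k, hk⟩
    exact hsb (isBounded_iff_forall_norm_le.2 ⟨k, hk⟩)
  choose x hxs hxk using hfar
  have hx0 : ∀ k, 0 < ‖x k‖ := fun k ↦ (Nat.cast_nonneg k).trans_lt (hxk k)
  obtain ⟨d, hd, φ, hφ, hlim⟩ := (isCompact_sphere (0 : E) 1).tendsto_subseq
    (x := fun k ↦ ‖x k‖⁻¹ • x k) fun k ↦ by
      simp [norm_smul, (hx0 k).ne']
  refine ⟨d, ne_zero_of_mem_unit_sphere ⟨d, hd⟩, fun t ht ↦ ?_⟩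
  refine hsc.mem_of_tendsto (hlim.const_smul t) ?_
  filter_upwards [(tendsto_natCast_atTop_atTop.comp hφ.tendsto_atTop).eventually_ge_atTop t]
    with k hk
  have htk : t ≤ ‖x (φ k)‖ := hk.trans (hxk _).le
  simpa only [Function.comp_apply, smul_smul, div_eq_mul_inv] using
    hs.smul_mem_of_zero_mem h0 (hxs (φ k))
      ⟨div_nonneg ht (hx0 _).le, div_le_one_of_le₀ htk (hx0 _).le⟩

theorem ConvexOn.exists_forall_le_of_ray_le_imp_eq_zero {f : E → ℝ}
    (hf : ConvexOn ℝ Set.univ f) (hfc : Continuous f)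
    (hrec : ∀ d : E, (∀ t : ℝ, 0 ≤ t → f (t • d) ≤ f 0) → d = 0) :
    ∃ x, ∀ y, f x ≤ f y := by
  set S : Set E := {x | f x ≤ f 0}
  have hSc : IsClosed S := isClosed_le hfc continuous_const
  have hSb : Bornology.IsBounded S := by
    by_contra hSb
    obtain ⟨d, hd, hray⟩ := (by simpa using hf.convex_le (f 0) : Convex ℝ S)
      |>.exists_ray_subset_of_not_isBounded hSc (le_refl (f 0)) hSb
    exact hd (hrec d hray)
  obtain ⟨x, hxS, hmin⟩ := (Metric.isCompact_of_isClosed_isBounded hSc hSb).exists_isMinOn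
    ⟨0, le_refl (f 0)⟩ hfc.continuousOn
  refine ⟨x, fun y ↦ ?_⟩
  by_cases hy : y ∈ S
  · exact hmin hy
  · exact hxS.trans (not_le.1 hy).le

theorem ConvexOn.exists_forall_le_of_ray_le_imp_mem {f : E → ℝ}
    (hf : ConvexOn ℝ Set.univ f) (hfc : Continuous f) (K : Submodule ℝ E)
    (hK : ∀ x, ∀ k ∈ K, f (x + k) = f x)
    (hrec : ∀ d : E, (∀ t : ℝ, 0 ≤ t → f (t • d) ≤ f 0) → d ∈ K) :
    ∃ x, ∀ y, f x ≤ f y := by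
  obtain ⟨W, hKW⟩ := K.exists_isCompl
  obtain ⟨w, hw⟩ := (hf.comp_linearMap W.subtype).exists_forall_le_of_ray_le_imp_eq_zero
    (hfc.comp continuous_subtype_val) fun d hd ↦ by
      have hdK : (d : E) ∈ K := hrec d (by simpa using hd)
      simpa using hKW.inf_eq_bot.le ⟨hdK, d.2⟩
  refine ⟨w, fun y ↦ ?_⟩
  obtain ⟨k, hk, u, hu, rfl⟩ :=
    Submodule.mem_sup.1 (hKW.sup_eq_top ▸ Submodule.mem_top : y ∈ K ⊔ W)
  rw [add_comm, hK u k hk]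
  exact hw ⟨u, hu⟩

end ConvexAnalysis

theorem exists_lt_mul_exp_mul_sub_mul {m a : ℝ} (hm : 0 < m) (ha : 0 < a) (b c : ℝ) :
    ∃ t : ℝ, 0 ≤ t ∧ b < m * exp (t * a) - t * c := by
  set q := m * a ^ 2 / 2
  have hq : 0 < q := by positivity
  set t := 1 + (|b| + |c|) / q
  have ht : 1 ≤ t := le_add_of_nonneg_right (by positivity)
  have hqt : q * t = q + |b| + |c| := by rw [mul_add, mul_one, mul_div_cancel₀ _ hq.ne']; ring
  have hquad : q * t ^ 2 ≤ m * exp (t * a) := calc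
    q * t ^ 2 = m * ((t * a) ^ 2 / 2) := by ring
    _ ≤ m * (1 + t * a + (t * a) ^ 2 / 2) := by gcongr; nlinarith
    _ ≤ m * exp (t * a) := by gcongr; exact quadratic_le_exp_of_nonneg (by positivity)
  refine ⟨t, by positivity, ?_⟩
  have hqt2 : q * t ^ 2 = (q + |b| + |c|) * t := by rw [sq, ← mul_assoc, hqt]
  nlinarith [le_abs_self b, le_abs_self c, le_mul_of_one_le_right (abs_nonneg b) ht,
    mul_le_mul_of_nonneg_right (le_abs_self c) (zero_le_one.trans ht)]

namespace MatrixScaling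

variable {ι : Type*}

/-- `z : ι ⊕ ι → ℝ` encodes the pair `(x, y)` of logarithmic scalings. -/
def pairSum (i j : ι) : (ι ⊕ ι → ℝ) →ₗ[ℝ] ℝ :=
  LinearMap.proj (.inl i) + LinearMap.proj (.inr j)

@[simp]
theorem pairSum_apply (i j : ι) (z : ι ⊕ ι → ℝ) : pairSum i j z = z (.inl i) + z (.inr j) := rfl

variable [Fintype ι]

noncomputable def potential (M : Matrix ι ι ℝ) (v : ι → ℝ) (z : ι ⊕ ι → ℝ) : ℝ :=
  ∑ i, ∑ j, M i j * exp (pairSum i j z) - ∑ i, v i * pairSum i i z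

/-- The `(x, y)` with `diag(e^x) M diag(e^y) = M`. -/
def trivialScalings (M : Matrix ι ι ℝ) : Submodule ℝ (ι ⊕ ι → ℝ) where
  carrier := {z | ∀ i j, M i j ≠ 0 → pairSum i j z = 0}
  add_mem' ha hb i j h := by rw [map_add, ha i j h, hb i j h, add_zero]
  zero_mem' i j _ := map_zero _
  smul_mem' c z hz i j h := by rw [map_smul, hz i j h, smul_zero]

variable (M : Matrix ι ι ℝ) (v : ι → ℝ)

theorem continuous_potential : Continuous (potential M v) := by
  unfold potential; simp only [pairSum_apply]; fun_prop

theorem convexOn_potential (hM : ∀ i j, 0 ≤ M i j) : ConvexOn ℝ Set.univ (potential M v) := by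
  have hexp : ∀ i j, ConvexOn ℝ Set.univ fun z ↦ M i j * exp (pairSum i j z) := fun i j ↦
    (convexOn_exp.comp_linearMap (pairSum i j)).smul (hM i j)
  refine (ConvexOn.sum convex_univ fun i _ ↦ ConvexOn.sum convex_univ fun j _ ↦ hexp i j).sub ?_
  have hlin : (fun z ↦ ∑ i, v i * pairSum i i z) = ⇑(∑ i, v i • pairSum i i) := by
    ext z; simp
  exact hlin ▸ LinearMap.concaveOn _ convex_univ

theorem potential_add_of_mem (hdiag : ∀ i, M i i ≠ 0) (z : ι ⊕ ι → ℝ) {e : ι ⊕ ι → ℝ}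
    (he : e ∈ trivialScalings M) : potential M v (z + e) = potential M v z := by
  have hexp : ∀ i j, M i j * exp (pairSum i j (z + e)) = M i j * exp (pairSum i j z) := by
    intro i j
    by_cases h : M i j = 0
    · simp [h]
    · rw [map_add, he i j h, add_zero]
  have hlin : ∀ i, pairSum i i (z + e) = pairSum i i z := fun i ↦ by
    rw [map_add, he i i (hdiag i), add_zero]
  simp only [potential, hexp, hlin]

theorem potential_smul (t : ℝ) (d : ι ⊕ ι → ℝ) :
    potential M v (t • d) =
      ∑ i, ∑ j, M i j * exp (t * pairSum i j d) - t * ∑ i, v i * pairSum i i d := by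
  simp only [potential, map_smul, smul_eq_mul, mul_sum]
  congr 1
  exact sum_congr rfl fun i _ ↦ by ring

theorem pairSum_nonpos_of_potential_smul_le (hM : ∀ i j, 0 ≤ M i j) {d : ι ⊕ ι → ℝ} {B : ℝ}
    (hB : ∀ t : ℝ, 0 ≤ t → potential M v (t • d) ≤ B) {i j : ι} (hij : M i j ≠ 0) :
    pairSum i j d ≤ 0 := by
  by_contra! hpos
  obtain ⟨t, ht, hlt⟩ := exists_lt_mul_exp_mul_sub_mul ((hM i j).lt_of_ne' hij) hpos B
    (∑ i, v i * pairSum i i d)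
  have hnn : ∀ i j, 0 ≤ M i j * exp (t * pairSum i j d) := fun i j ↦
    mul_nonneg (hM i j) (exp_pos _).le
  have hterm : M i j * exp (t * pairSum i j d) ≤ ∑ i, ∑ j, M i j * exp (t * pairSum i j d) :=
    (single_le_sum (fun j _ ↦ hnn i j) (mem_univ j)).trans
      (single_le_sum (f := fun i ↦ ∑ j, _) (fun i _ ↦ sum_nonneg fun j _ ↦ hnn i j) (mem_univ i))
  have := hB t ht
  rw [potential_smul] at this
  linarith

theorem sum_mul_pairSum_nonneg_of_potential_smul_le (hM : ∀ i j, 0 ≤ M i j)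
    {d : ι ⊕ ι → ℝ} {B : ℝ} (hB : ∀ t : ℝ, 0 ≤ t → potential M v (t • d) ≤ B) :
    0 ≤ ∑ i, v i * pairSum i i d := by
  set c := ∑ i, v i * pairSum i i d
  by_contra! hc
  set t := |B| / -c + 1
  have ht : 0 ≤ t := add_nonneg (div_nonneg (abs_nonneg B) (neg_nonneg.2 hc.le)) zero_le_one
  have htc : t * c = c - |B| := by
    have := div_mul_cancel₀ |B| (neg_ne_zero.2 hc.ne)
    linear_combination -this
  have hexp : 0 ≤ ∑ i, ∑ j, M i j * exp (t * pairSum i j d) :=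
    sum_nonneg fun i _ ↦ sum_nonneg fun j _ ↦ mul_nonneg (hM i j) (exp_pos _).le
  have h := hB t ht
  rw [potential_smul] at h
  linarith [le_abs_self B]

theorem mem_trivialScalings_of_potential_smul_le (hM : ∀ i j, 0 ≤ M i j)
    (hdiag : ∀ i, M i i ≠ 0) (hsymm : ∀ i j, M i j ≠ 0 ↔ M j i ≠ 0) (hv : ∀ i, 0 < v i)
    {d : ι ⊕ ι → ℝ} {B : ℝ} (hB : ∀ t : ℝ, 0 ≤ t → potential M v (t • d) ≤ B) :
    d ∈ trivialScalings M := by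
  have hnonpos : ∀ i j, M i j ≠ 0 → pairSum i j d ≤ 0 := fun i j ↦
    pairSum_nonpos_of_potential_smul_le M v hM hB
  have hdiag0 : ∀ i, pairSum i i d = 0 := by
    have hterm : ∀ i ∈ univ, v i * pairSum i i d ≤ 0 := fun i _ ↦
      mul_nonpos_of_nonneg_of_nonpos (hv i).le (hnonpos i i (hdiag i))
    have hsum := (sum_eq_zero_iff_of_nonpos hterm).1 <|
      (sum_nonpos hterm).antisymm (sum_mul_pairSum_nonneg_of_potential_smul_le M v hM hB)
    exact fun i ↦ (mul_eq_zero.1 (hsum i (mem_univ i))).resolve_left (hv i).ne'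
  intro i j hij
  have hswap : pairSum i j d + pairSum j i d = pairSum i i d + pairSum j j d := by
    simp only [pairSum_apply]; ring
  linarith [hnonpos i j hij, hnonpos j i ((hsymm i j).1 hij), hdiag0 i, hdiag0 j]

theorem exists_forall_potential_le (hM : ∀ i j, 0 ≤ M i j)
    (hdiag : ∀ i, M i i ≠ 0) (hsymm : ∀ i j, M i j ≠ 0 ↔ M j i ≠ 0) (hv : ∀ i, 0 < v i) :
    ∃ z, ∀ z', potential M v z ≤ potential M v z' :=
  (convexOn_potential M v hM).exists_forall_le_of_ray_le_imp_mem (continuous_potential M v)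
    (trivialScalings M) (fun _ _ ↦ potential_add_of_mem M v hdiag _)
    fun _ hd ↦ mem_trivialScalings_of_potential_smul_le M v hM hdiag hsymm hv hd

theorem hasDerivAt_potential_add_smul (z δ : ι ⊕ ι → ℝ) :
    HasDerivAt (fun t : ℝ ↦ potential M v (z + t • δ))
      (∑ i, ∑ j, M i j * (pairSum i j δ * exp (pairSum i j z)) - ∑ i, v i * pairSum i i δ) 0 := by
  have hline : ∀ i j, HasDerivAt (fun t : ℝ ↦ pairSum i j (z + t • δ)) (pairSum i j δ) 0 :=
    fun i j ↦ by
      simpa [map_add, map_smul] using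
        (hasDerivAt_mul_const (pairSum i j δ)).const_add (pairSum i j z)
  have hexp := HasDerivAt.fun_sum (u := univ) fun i _ ↦ HasDerivAt.fun_sum (u := univ) fun j _ ↦
    ((hline i j).exp).const_mul (M i j)
  have hlin := HasDerivAt.fun_sum (u := univ) fun i _ ↦ (hline i i).const_mul (v i)
  simpa [potential, mul_comm] using hexp.fun_sub hlin

variable {M v}

theorem sum_mul_pairSum_mul_exp_eq_of_forall_potential_le {z : ι ⊕ ι → ℝ}
    (hz : ∀ z', potential M v z ≤ potential M v z') (δ : ι ⊕ ι → ℝ) :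
    ∑ i, ∑ j, M i j * (pairSum i j δ * exp (pairSum i j z)) = ∑ i, v i * pairSum i i δ := by
  have hmin : IsLocalMin (fun t : ℝ ↦ potential M v (z + t • δ)) 0 :=
    Filter.Eventually.of_forall fun t ↦ by simpa using hz (z + t • δ)
  exact sub_eq_zero.1 (hmin.hasDerivAt_eq_zero (hasDerivAt_potential_add_smul M v z δ))

theorem row_sum_eq_of_forall_potential_le {z : ι ⊕ ι → ℝ}
    (hz : ∀ z', potential M v z ≤ potential M v z') (k : ι) :
    ∑ j, M k j * exp (pairSum k j z) = v k := by
  classical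
  simpa [Pi.single_apply] using
    sum_mul_pairSum_mul_exp_eq_of_forall_potential_le hz (Pi.single (.inl k) 1)

theorem col_sum_eq_of_forall_potential_le {z : ι ⊕ ι → ℝ}
    (hz : ∀ z', potential M v z ≤ potential M v z') (k : ι) :
    ∑ i, M i k * exp (pairSum i k z) = v k := by
  classical
  simpa [Pi.single_apply] using
    sum_mul_pairSum_mul_exp_eq_of_forall_potential_le hz (Pi.single (.inr k) 1)

theorem diagonal_exp_mul_mul_diagonal_exp_apply [DecidableEq ι] (z : ι ⊕ ι → ℝ) (i j : ι) :
    (diagonal (fun i ↦ exp (z (.inl i))) * M * diagonal fun j ↦ exp (z (.inr j))) i j =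
      M i j * exp (pairSum i j z) := by
  rw [mul_diagonal, diagonal_mul, pairSum_apply, exp_add]
  ring

end MatrixScaling

open MatrixScaling in
/-- If a square nonnegative matrix `M` has nonzero diagonal entries and a
symmetric support pattern, then for any strictly positive vector `v` there
exist positive diagonal scalings `D_ℓ, D_r` such that `S = D_ℓ M D_r` has
row sums `v` and column sums `v`. -/
theorem exists_scaling_common_row_col_sums
    {n : ℕ} (M : Matrix (Fin n) (Fin n) ℝ)
    (hM : ∀ i j, 0 ≤ M i j)
    (hdiag : ∀ i, M i i ≠ 0)
    (hsymm : ∀ i j, M i j ≠ 0 ↔ M j i ≠ 0)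
    (v : Fin n → ℝ) (hv : ∀ i, 0 < v i) :
    ∃ (dℓ dr : Fin n → ℝ), (∀ i, 0 < dℓ i) ∧ (∀ j, 0 < dr j) ∧
      (∀ i, ∑ j, (diagonal dℓ * M * diagonal dr) i j = v i) ∧
      (∀ j, ∑ i, (diagonal dℓ * M * diagonal dr) i j = v j) := by
  obtain ⟨z, hz⟩ := exists_forall_potential_le M v hM hdiag hsymm hv
  refine ⟨fun i ↦ exp (z (.inl i)), fun j ↦ exp (z (.inr j)), fun _ ↦ exp_pos _,
    fun _ ↦ exp_pos _, fun i ↦ ?_, fun j ↦ ?_⟩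
  · simp only [diagonal_exp_mul_mul_diagonal_exp_apply, row_sum_eq_of_forall_potential_le hz]
  · simp only [diagonal_exp_mul_mul_diagonal_exp_apply, col_sum_eq_of_forall_potential_le hz]
end

section
/- Let M be an n×n nonnegative matrix with nonzero diagonal entries, supp(M) = supp(Mᵀ), M symmetric and M fully indecomposable, and let v ∈ ℝⁿ be strictly positive. If positive diagonal matrices D_ℓ, D_r satisfy (D_ℓ M D_r)·1ₙ = v and 1ₙᵀ·(D_ℓ M D_r) = vᵀ, then there exists a positive diagonal matrix D such that D M D = D_ℓ M D_r. -/
open Matrix Finset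

/-- A square nonnegative matrix `M` (on index type `ι`) is fully
indecomposable if there exist no nonempty subsets `R` of rows and `C` of
columns with `|R| + |C| = n` and `M i j = 0` for all `i ∈ R`, `j ∈ C`.
This is equivalent to: there are no permutation matrices `P, Q` with
`P M Q` block upper triangular with square diagonal blocks of positive
sizes. -/
def FullyIndecomposable {ι : Type*} [Fintype ι] (M : Matrix ι ι ℝ) : Prop :=
  ¬ ∃ (R C : Finset ι), R.Nonempty ∧ C.Nonempty ∧
      R.card + C.card = Fintype.card ι ∧ ∀ i ∈ R, ∀ j ∈ C, M i j = 0

/-!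
Put `e i = dr i / dℓ i`. Equal row and column sums of `diagonal dℓ * M * diagonal dr`, together
with the symmetry of `M`, say that `∑ j, M i j * dℓ j * (e i - e j) = 0` for every `i`, i.e. `e` is
harmonic for the weighted graph of `M`. By the maximum principle the set where `e` is maximal is
closed under the edges of `M`, and full indecomposability forces it to be everything. So `e` is a
constant `c > 0`, and `d = √c • dℓ` works.
-/

namespace FullyIndecomposable

variable {ι : Type*} [Fintype ι] {M : Matrix ι ι ℝ}

theorem eq_univ_of_forall_mem (hM : FullyIndecomposable M) {S : Finset ι} (hS : S.Nonempty)
    (hclosed : ∀ i ∈ S, ∀ j, M i j ≠ 0 → j ∈ S) : S = univ := by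
  classical
  by_contra hne
  obtain ⟨k, hk⟩ : ∃ k, k ∉ S := by simpa [eq_univ_iff_forall] using hne
  refine hM ⟨S, univ \ S, hS, ⟨k, by simpa using hk⟩, ?_, fun i hi j hj => ?_⟩
  · rw [card_sdiff_of_subset (subset_univ S), card_univ,
      Nat.add_sub_cancel' (card_le_univ S)]
  · by_contra hij
    exact (mem_sdiff.1 hj).2 (hclosed i hi j hij)

theorem eq_of_sum_mul_sub_eq_zero (hM : FullyIndecomposable M) (hnonneg : ∀ i j, 0 ≤ M i j)
    {w e : ι → ℝ} (hw : ∀ i, 0 < w i) (he : ∀ i, ∑ j, M i j * w j * (e i - e j) = 0)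
    (i j : ι) : e i = e j := by
  classical
  obtain ⟨i₀, -, hi₀⟩ := exists_max_image univ e ⟨i, mem_univ i⟩
  have hclosed : ∀ k ∈ univ.filter (e · = e i₀), ∀ l, M k l ≠ 0 → l ∈ univ.filter (e · = e i₀) := by
    intro k hk l hkl
    rw [mem_filter] at hk ⊢
    have hterm_nonneg : ∀ m ∈ univ, 0 ≤ M k m * w m * (e k - e m) := fun m _ =>
      mul_nonneg (mul_nonneg (hnonneg k m) (hw m).le) (sub_nonneg.2 (hk.2 ▸ hi₀ m (mem_univ m)))
    have hterm := (sum_eq_zero_iff_of_nonneg hterm_nonneg).1 (he k) l (mem_univ l)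
    rw [mul_eq_zero, mul_eq_zero, sub_eq_zero] at hterm
    refine ⟨mem_univ l, ?_⟩
    rcases hterm with (hMkl | hwl) | hel
    · exact absurd hMkl hkl
    · exact absurd hwl (hw l).ne'
    · exact hel.symm.trans hk.2
  have hmax := hM.eq_univ_of_forall_mem ⟨i₀, by simp⟩ hclosed
  have hmem : ∀ k, e k = e i₀ := fun k => by
    simpa using eq_univ_iff_forall.1 hmax k
  rw [hmem i, hmem j]

end FullyIndecomposable

variable {ι : Type*} [Fintype ι] [DecidableEq ι] {M : Matrix ι ι ℝ}

theorem sum_mul_sub_div_eq_zero_of_sum_row_eq_sum_col (hMsymm : M.IsSymm) {dℓ dr : ι → ℝ}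
    (hdℓ : ∀ i, dℓ i ≠ 0)
    (hsums : ∀ i, ∑ j, (diagonal dℓ * M * diagonal dr) i j =
      ∑ j, (diagonal dℓ * M * diagonal dr) j i)
    (i : ι) : ∑ j, M i j * dℓ j * (dr i / dℓ i - dr j / dℓ j) = 0 := by
  have hi := hsums i
  simp only [mul_diagonal, diagonal_mul, hMsymm.apply i] at hi
  have hscaled : dℓ i * ∑ j, M i j * dℓ j * (dr i / dℓ i - dr j / dℓ j) =
      ∑ j, dℓ j * M i j * dr i - ∑ j, dℓ i * M i j * dr j := by
    rw [mul_sum, ← sum_sub_distrib]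
    refine sum_congr rfl fun j _ => ?_
    field_simp [hdℓ i, hdℓ j]
  rw [hi, sub_self] at hscaled
  exact (mul_eq_zero.1 hscaled).resolve_left (hdℓ i)

theorem diagonal_smul_mul_mul_diagonal_smul_sqrt {c : ℝ} (hc : 0 ≤ c) {dℓ dr : ι → ℝ}
    (hdr : ∀ i, dr i = c * dℓ i) :
    diagonal (√c • dℓ) * M * diagonal (√c • dℓ) = diagonal dℓ * M * diagonal dr := by
  ext i j
  simp only [mul_diagonal, diagonal_mul, Pi.smul_apply, smul_eq_mul, hdr j]
  linear_combination dℓ i * M i j * dℓ j * Real.mul_self_sqrt hc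

theorem exists_symmetric_scaling_general
    {n : ℕ} (M : Matrix (Fin n) (Fin n) ℝ)
    (hM : ∀ i j, 0 ≤ M i j)
    (hMsymm : Mᵀ = M)
    (hfull : FullyIndecomposable M)
    (v : Fin n → ℝ)
    (dℓ dr : Fin n → ℝ) (hdℓ : ∀ i, 0 < dℓ i) (hdr : ∀ j, 0 < dr j)
    (hrow : ∀ i, ∑ j, (diagonal dℓ * M * diagonal dr) i j = v i)
    (hcol : ∀ j, ∑ i, (diagonal dℓ * M * diagonal dr) i j = v j) :
    ∃ d : Fin n → ℝ, (∀ i, 0 < d i) ∧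
      diagonal d * M * diagonal d = diagonal dℓ * M * diagonal dr := by
  rcases isEmpty_or_nonempty (Fin n) with hn | ⟨⟨i₀⟩⟩
  · exact ⟨dℓ, hdℓ, Subsingleton.elim _ _⟩
  have hc : 0 < dr i₀ / dℓ i₀ := div_pos (hdr i₀) (hdℓ i₀)
  have hharmonic := sum_mul_sub_div_eq_zero_of_sum_row_eq_sum_col hMsymm (fun i => (hdℓ i).ne')
    (fun i => (hrow i).trans (hcol i).symm)
  have hconst : ∀ i, dr i = dr i₀ / dℓ i₀ * dℓ i := fun i => by
    rw [← hfull.eq_of_sum_mul_sub_eq_zero hM hdℓ hharmonic i i₀, div_mul_cancel₀ _ (hdℓ i).ne']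
  exact ⟨√(dr i₀ / dℓ i₀) • dℓ, fun i => mul_pos (Real.sqrt_pos.2 hc) (hdℓ i),
    diagonal_smul_mul_mul_diagonal_smul_sqrt hc.le hconst⟩

/-- If a symmetric, fully indecomposable nonnegative matrix `M` with nonzero
diagonal entries and symmetric support is scaled by positive diagonal matrices
`D_ℓ, D_r` so that `D_ℓ M D_r` has common row- and column-sum vector `v`, then
there is a single positive diagonal `D` with `D M D = D_ℓ M D_r`. -/
theorem exists_symmetric_scaling
    {n : ℕ} (M : Matrix (Fin n) (Fin n) ℝ)
    (hM : ∀ i j, 0 ≤ M i j)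
    (hdiag : ∀ i, M i i ≠ 0)
    (hsupp : ∀ i j, M i j ≠ 0 ↔ M j i ≠ 0)
    (hMsymm : Mᵀ = M)
    (hfull : FullyIndecomposable M)
    (v : Fin n → ℝ) (hv : ∀ i, 0 < v i)
    (dℓ dr : Fin n → ℝ) (hdℓ : ∀ i, 0 < dℓ i) (hdr : ∀ j, 0 < dr j)
    (hrow : ∀ i, ∑ j, (diagonal dℓ * M * diagonal dr) i j = v i)
    (hcol : ∀ j, ∑ i, (diagonal dℓ * M * diagonal dr) i j = v j) :
    ∃ d : Fin n → ℝ, (∀ i, 0 < d i) ∧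
      diagonal d * M * diagonal d = diagonal dℓ * M * diagonal dr :=
  exists_symmetric_scaling_general M hM hMsymm hfull v dℓ dr hdℓ hdr hrow hcol
end

section
/- Let M be an m×n nonnegative real matrix and α ≠ 0 a real number. Then the (m+n)×(m+n) symmetric matrix M_α := [[ (α²/m²)·1ₘ1ₘᵀ , M ],[ Mᵀ , (α²/n²)·1ₙ1ₙᵀ ]] has total support. Moreover, if M ≠ 0, then M_α is fully indecomposable. -/
open Matrix Finset

/-- Total support for a square matrix on an arbitrary finite index type. -/
def TotalSupport {ι : Type*} [Fintype ι] (M : Matrix ι ι ℝ) : Prop :=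
  ∀ i j, 0 < M i j → ∃ σ : Equiv.Perm ι, σ i = j ∧ ∀ k, 0 < M k (σ k)

/-- The regularized matrix
`M_α = [[(α²/m²)·1ₘ1ₘᵀ, M], [Mᵀ, (α²/n²)·1ₙ1ₙᵀ]]` has total support, and
is fully indecomposable whenever `M ≠ 0`. -/
theorem regularized_totalSupport_and_fullyIndecomposable
    {m n : ℕ} (M : Matrix (Fin m) (Fin n) ℝ)
    (hM : ∀ i j, 0 ≤ M i j) (α : ℝ) (hα : α ≠ 0) :
    TotalSupport (Matrix.fromBlocks
      (Matrix.of fun (_ : Fin m) (_ : Fin m) => α ^ 2 / (m : ℝ) ^ 2) M Mᵀ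
      (Matrix.of fun (_ : Fin n) (_ : Fin n) => α ^ 2 / (n : ℝ) ^ 2)) ∧
    (M ≠ 0 → FullyIndecomposable (Matrix.fromBlocks
      (Matrix.of fun (_ : Fin m) (_ : Fin m) => α ^ 2 / (m : ℝ) ^ 2) M Mᵀ
      (Matrix.of fun (_ : Fin n) (_ : Fin n) => α ^ 2 / (n : ℝ) ^ 2))) := by
  set A := Matrix.fromBlocks
      (Matrix.of fun (_ : Fin m) (_ : Fin m) => α ^ 2 / (m : ℝ) ^ 2) M Mᵀ
      (Matrix.of fun (_ : Fin n) (_ : Fin n) => α ^ 2 / (n : ℝ) ^ 2) with hA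
  have hα2 : (0:ℝ) < α ^ 2 := by positivity
  have hm : ∀ _ : Fin m, (0:ℝ) < α ^ 2 / (m : ℝ) ^ 2 := by
    intro a
    have : (0:ℝ) < m := by exact_mod_cast a.pos
    positivity
  have hn : ∀ _ : Fin n, (0:ℝ) < α ^ 2 / (n : ℝ) ^ 2 := by
    intro a
    have : (0:ℝ) < n := by exact_mod_cast a.pos
    positivity
  have hdiag : ∀ k, 0 < A k k := by
    rintro (a | b)
    · simpa [hA] using hm a
    · simpa [hA] using hn b
  have hsymm : ∀ i j, A i j = A j i := by
    rintro (a | b) (c | d) <;> simp [hA]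
  constructor
  · intro i j hij
    refine ⟨Equiv.swap i j, Equiv.swap_apply_left i j, fun k => ?_⟩
    rcases eq_or_ne k i with rfl | hki
    · simpa using hij
    rcases eq_or_ne k j with rfl | hkj
    · rw [Equiv.swap_apply_right, hsymm]; exact hij
    · rw [Equiv.swap_apply_of_ne_of_ne hki hkj]; exact hdiag k
  · intro hMne
    rintro ⟨R, C, hR, hC, hcard, hz⟩
    have hRC : ¬ (R.toLeft.Nonempty ∧ C.toLeft.Nonempty) := by
      rintro ⟨⟨a, ha⟩, ⟨b, hb⟩⟩
      have := hz (Sum.inl a) (by simpa using ha) (Sum.inl b) (by simpa using hb)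
      simp [hA] at this
      rcases this with h | h
      · exact hα h
      · exact absurd h a.pos.ne'
    have hRC2 : ¬ (R.toRight.Nonempty ∧ C.toRight.Nonempty) := by
      rintro ⟨⟨a, ha⟩, ⟨b, hb⟩⟩
      have := hz (Sum.inr a) (by simpa using ha) (Sum.inr b) (by simpa using hb)
      simp [hA] at this
      rcases this with h | h
      · exact hα h
      · exact absurd h a.pos.ne'
    have hcard' : R.toLeft.card + R.toRight.card + (C.toLeft.card + C.toRight.card) = m + n := by
      rw [Finset.card_toLeft_add_card_toRight, Finset.card_toLeft_add_card_toRight, hcard]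
      simp
    have hRne : R.toLeft.Nonempty ∨ R.toRight.Nonempty := by
      obtain ⟨(a | b), hx⟩ := hR
      · exact Or.inl ⟨a, by simpa using hx⟩
      · exact Or.inr ⟨b, by simpa using hx⟩
    have hCne : C.toLeft.Nonempty ∨ C.toRight.Nonempty := by
      obtain ⟨(a | b), hx⟩ := hC
      · exact Or.inl ⟨a, by simpa using hx⟩
      · exact Or.inr ⟨b, by simpa using hx⟩
    -- Either (R ⊆ left, C ⊆ right) or (R ⊆ right, C ⊆ left); in both cases M = 0
    apply hMne
    ext a b
    simp only [Matrix.zero_apply]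
    rcases hRne with hR1 | hR2
    · -- R.toLeft nonempty, so C.toLeft empty, so C.toRight nonempty, so R.toRight empty
      have hC1 : C.toLeft = ∅ := by
        by_contra h
        exact hRC ⟨hR1, Finset.nonempty_of_ne_empty h⟩
      have hC2 : C.toRight.Nonempty := hCne.resolve_left (by simp [hC1])
      have hR2e : R.toRight = ∅ := by
        by_contra h
        exact hRC2 ⟨Finset.nonempty_of_ne_empty h, hC2⟩
      -- card R.toLeft ≤ m, card C.toRight ≤ n, sum = m+n ⇒ both univ
      have h1 : R.toLeft.card ≤ m := by simpa using Finset.card_le_univ R.toLeft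
      have h2 : C.toRight.card ≤ n := by simpa using Finset.card_le_univ C.toRight
      rw [hC1, hR2e] at hcard'
      simp at hcard'
      have hRu : R.toLeft = Finset.univ :=
        Finset.eq_univ_of_card _ (by simpa using le_antisymm h1 (by omega))
      have hCu : C.toRight = Finset.univ :=
        Finset.eq_univ_of_card _ (by simpa using le_antisymm h2 (by omega))
      have ha' : Sum.inl a ∈ R := by
        rw [← Finset.mem_toLeft, hRu]; exact Finset.mem_univ a
      have hb' : Sum.inr b ∈ C := by
        rw [← Finset.mem_toRight, hCu]; exact Finset.mem_univ b
      have := hz _ ha' _ hb'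
      simpa [hA] using this
    · -- symmetric case
      have hC2 : C.toRight = ∅ := by
        by_contra h
        exact hRC2 ⟨hR2, Finset.nonempty_of_ne_empty h⟩
      have hC1 : C.toLeft.Nonempty := hCne.resolve_right (by simp [hC2])
      have hR1e : R.toLeft = ∅ := by
        by_contra h
        exact hRC ⟨Finset.nonempty_of_ne_empty h, hC1⟩
      have h1 : R.toRight.card ≤ n := by simpa using Finset.card_le_univ R.toRight
      have h2 : C.toLeft.card ≤ m := by simpa using Finset.card_le_univ C.toLeft
      rw [hC2, hR1e] at hcard'
      simp at hcard'
      have hRu : R.toRight = Finset.univ :=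
        Finset.eq_univ_of_card _ (by simpa using le_antisymm h1 (by omega))
      have hCu : C.toLeft = Finset.univ :=
        Finset.eq_univ_of_card _ (by simpa using le_antisymm h2 (by omega))
      have ha' : Sum.inr b ∈ R := by
        rw [← Finset.mem_toRight, hRu]; exact Finset.mem_univ b
      have hb' : Sum.inl a ∈ C := by
        rw [← Finset.mem_toLeft, hCu]; exact Finset.mem_univ a
      have := hz _ ha' _ hb'
      simpa [hA] using this
end

section
/- Let M be an m×n nonnegative matrix, r ∈ ℝ^m and c ∈ ℝ^n strictly positive with 1ₘᵀr = cᵀ1ₙ. If there exist vectors u ∈ ℝ^m and w ∈ ℝ^n with u_i + w_j ≤ 0 for all (i,j) ∈ supp(M), rᵀu = cᵀw = 0, and u_{i₀} + w_{j₀} < 0 for some (i₀,j₀) ∈ supp(M), then there exist no positive diagonal matrices D_ℓ, D_r such that D_ℓ M D_r has row sums r and column sums c. -/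
open Matrix Finset

/-- 'Only if' direction of the Rothblum–Schneider criterion: if there exist
vectors `u, w` with `u_i + w_j ≤ 0` on the support of `M`, `rᵀu = cᵀw = 0`,
and strict inequality at some support pair, then no positive diagonal scaling
of `M` has row sums `r` and column sums `c`. -/
theorem no_scaling_of_RS_obstruction
    {m n : ℕ} (M : Matrix (Fin m) (Fin n) ℝ)
    (hM : ∀ i j, 0 ≤ M i j)
    (r : Fin m → ℝ) (c : Fin n → ℝ)
    (hr : ∀ i, 0 < r i) (hc : ∀ j, 0 < c j)
    (hrc : ∑ i, r i = ∑ j, c j)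
    (u : Fin m → ℝ) (w : Fin n → ℝ)
    (hle : ∀ i j, M i j ≠ 0 → u i + w j ≤ 0)
    (hru : ∑ i, r i * u i = 0) (hcw : ∑ j, c j * w j = 0)
    (i₀ : Fin m) (j₀ : Fin n) (hij₀ : M i₀ j₀ ≠ 0)
    (hlt : u i₀ + w j₀ < 0) :
    ¬ ∃ (dℓ : Fin m → ℝ) (dr : Fin n → ℝ),
      (∀ i, 0 < dℓ i) ∧ (∀ j, 0 < dr j) ∧
      (∀ i, ∑ j, (diagonal dℓ * M * diagonal dr) i j = r i) ∧
      (∀ j, ∑ i, (diagonal dℓ * M * diagonal dr) i j = c j) := by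
  rintro ⟨dℓ, dr, hdℓ, hdr, hrow, hcol⟩
  set S : Matrix (Fin m) (Fin n) ℝ := fun i j => dℓ i * M i j * dr j with hS
  have hSeq : ∀ i j, (diagonal dℓ * M * diagonal dr) i j = S i j := by
    intro i j
    simp [Matrix.mul_apply, Matrix.diagonal_apply, Finset.sum_ite_eq,
      Finset.sum_ite_eq', hS, mul_comm]
  have hrow' : ∀ i, ∑ j, S i j = r i := by
    intro i; rw [← hrow i]; exact Finset.sum_congr rfl fun j _ => (hSeq i j).symm
  have hcol' : ∀ j, ∑ i, S i j = c j := by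
    intro j; rw [← hcol j]; exact Finset.sum_congr rfl fun i _ => (hSeq i j).symm
  have key : ∑ i, ∑ j, S i j * (u i + w j) = 0 := by
    have e1 : ∑ i, ∑ j, S i j * u i = 0 := by
      simp_rw [← Finset.sum_mul, hrow']
      simpa [mul_comm] using hru
    have e2 : ∑ i, ∑ j, S i j * w j = 0 := by
      rw [Finset.sum_comm]
      have : ∀ j, ∑ i, S i j * w j = c j * w j := by
        intro j; rw [← Finset.sum_mul, hcol', mul_comm]
      simp_rw [this]
      simpa [mul_comm] using hcw
    calc ∑ i, ∑ j, S i j * (u i + w j)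
        = (∑ i, ∑ j, S i j * u i) + ∑ i, ∑ j, S i j * w j := by
          simp [mul_add, Finset.sum_add_distrib]
      _ = 0 := by rw [e1, e2, add_zero]
  have hterm : ∀ i j, S i j * (u i + w j) ≤ 0 := by
    intro i j
    by_cases h : M i j = 0
    · simp [hS, h]
    · exact mul_nonpos_of_nonneg_of_nonpos
        (mul_nonneg (mul_nonneg (hdℓ i).le (hM i j)) (hdr j).le) (hle i j h)
  have hneg : S i₀ j₀ * (u i₀ + w j₀) < 0 := by
    apply mul_neg_of_pos_of_neg _ hlt
    have := lt_of_le_of_ne (hM i₀ j₀) (Ne.symm hij₀)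
    exact mul_pos (mul_pos (hdℓ i₀) this) (hdr j₀)
  have : ∑ i, ∑ j, S i j * (u i + w j) < 0 := by
    have h1 : ∑ j, S i₀ j * (u i₀ + w j) < 0 := by
      apply Finset.sum_neg' (fun j _ => hterm i₀ j) ⟨j₀, Finset.mem_univ _, hneg⟩
    apply Finset.sum_neg' (fun i _ => Finset.sum_nonpos (fun j _ => hterm i j))
      ⟨i₀, Finset.mem_univ _, h1⟩
  linarith [key, this]
end
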